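/- arXiv:1909.12659 — 4 statements merged into one kernel-verified Lean document; each statement's English description precedes it below -/
import Mathlib

section
/- Let A be an N×N complex matrix with ‖exp(tA)‖ ≤ 1 for all t ≥ 0, and fix an explicit s-stage Runge–Kutta tableau. Let T > 0, M ≥ 0 and 0 ≤ ε ≤ 1. Let F : ℝ × ℂ^N → ℂ^N satisfy ‖F(t,x)‖ ≤ M for all (t,x), and let u, d : [0,T] → ℂ^N with u differentiable, u′(t) = A·u(t) + F(t,u(t)) + d(t), ‖u′(t)‖ ≤ M and ‖d(t)‖ ≤ ε for all t ∈ [0,T]. Then there exists a constant C, depending only on the tableau and M (in particular independent of N, A, k and ε), such that for every k ∈ (0,1] and every t_n with t_n, t_n + k ∈ [0,T], the Lawson step with boundary data β ≡ 0 from U = u(t_n) at time t_n satisfies ‖U⁺ − u(t_n + k)‖ ≤ C·k. -/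
open MeasureTheory Matrix

attribute [local instance] Matrix.linftyOpNormedAddCommGroup Matrix.linftyOpNormedRing
  Matrix.linftyOpNormedAlgebra

/-- `phi j s M` is `φ_j(s M)`: `φ_0(sM) = exp(sM)` and, for `j ≥ 1`,
`φ_j(sM) = s^{-j} ∫_0^s exp((s-τ)M) τ^{j-1}/(j-1)! dτ`. -/
noncomputable def phi {N : ℕ} (j : ℕ) (s : ℝ) (M : Matrix (Fin N) (Fin N) ℂ) :
    Matrix (Fin N) (Fin N) ℂ :=
  match j with
  | 0 => NormedSpace.exp (s • M)
  | Nat.succ j =>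
      (s ^ (j + 1))⁻¹ •
        ∫ τ in (0:ℝ)..s, (τ ^ j / (Nat.factorial j : ℝ)) • NormedSpace.exp ((s - τ) • M)

/-- An explicit `s`-stage Runge-Kutta tableau: coefficients `a i j` (only the entries with
`j < i` are used by the schemes below, so the tableau is explicit), weights `b i` and
nodes `c i ∈ [0,1]`. -/
structure RKTableau (s : ℕ) where
  a : Fin s → Fin s → ℝ
  b : Fin s → ℝ
  c : Fin s → ℝ
  c_nonneg : ∀ i, 0 ≤ c i
  c_le_one : ∀ i, c i ≤ 1

/-- The stages `K_i` of the Lawson method with tableau `tab`, matrix `A`, step size `k`,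
nonlinearity `F` and boundary data `β`, starting from the value `U` at time `t`:
`K_i = exp(c_i kA)U + k Σ_{j<i} a_{ij} exp((c_i − c_j)kA)(β(t + c_j k) + F(t + c_j k, K_j))`. -/
noncomputable def lawsonStages {s N : ℕ} (tab : RKTableau s) (A : Matrix (Fin N) (Fin N) ℂ)
    (k : ℝ) (F : ℝ → (Fin N → ℂ) → Fin N → ℂ) (β : ℝ → Fin N → ℂ) (t : ℝ) (U : Fin N → ℂ) :
    Fin s → Fin N → ℂ
  | i =>
    (NormedSpace.exp ((tab.c i * k) • A)).mulVec U +
      k • ∑ j ∈ (Finset.univ.filter (fun j => j < i)).attach,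
        tab.a i j.1 • (NormedSpace.exp (((tab.c i - tab.c j.1) * k) • A)).mulVec
          (β (t + tab.c j.1 * k) +
            F (t + tab.c j.1 * k) (lawsonStages tab A k F β t U j.1))
  termination_by i => i.1
  decreasing_by
    have hj := j.2
    simp only [Finset.mem_filter, Finset.mem_univ, true_and] at hj
    exact hj

/-- One step of the Lawson method:
`U⁺ = exp(kA)U + k Σ_i b_i exp((1 − c_i)kA)(β(t + c_i k) + F(t + c_i k, K_i))`. -/
noncomputable def lawsonStep {s N : ℕ} (tab : RKTableau s) (A : Matrix (Fin N) (Fin N) ℂ)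
    (k : ℝ) (F : ℝ → (Fin N → ℂ) → Fin N → ℂ) (β : ℝ → Fin N → ℂ) (t : ℝ) (U : Fin N → ℂ) :
    Fin N → ℂ :=
  (NormedSpace.exp (k • A)).mulVec U +
    k • ∑ i : Fin s, tab.b i • (NormedSpace.exp (((1 - tab.c i) * k) • A)).mulVec
      (β (t + tab.c i * k) + F (t + tab.c i * k) (lawsonStages tab A k F β t U i))

/-!
Both the Lawson step and the exact solution stay within `O(k)` of the free flow
`exp(kA) u(tₙ)`. The step adds `k Σ bᵢ exp((1 - cᵢ)kA) F(…)`, and each term has norm at most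
`|bᵢ| M` because `exp(tA)` is a contraction for `t ≥ 0`. For the solution, variation of constants:
`τ ↦ exp((tₙ + k - τ)A) u(τ)` has derivative `exp((tₙ + k - τ)A)(F(τ, u(τ)) + d(τ))`, of norm at
most `M + ε`, so the mean value inequality bounds its increment over `[tₙ, tₙ + k]`, which is
`u(tₙ + k) - exp(kA) u(tₙ)`, by `(M + ε) k`.
-/

open NormedSpace Set

section ExponentialPropagator

variable {n : Type*} [Fintype n] [DecidableEq n]

noncomputable def Matrix.mulVecCLM : Matrix n n ℂ →L[ℝ] (n → ℂ) →L[ℝ] (n → ℂ) :=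
  LinearMap.mkContinuous₂ (Matrix.mulVecBilin ℝ ℝ) 1
    fun A v => by rw [one_mul]; exact linfty_opNorm_mulVec A v

@[simp] lemma Matrix.mulVecCLM_apply (A : Matrix n n ℂ) (v : n → ℂ) :
    Matrix.mulVecCLM A v = A *ᵥ v := rfl

lemma norm_exp_smul_mulVec_le {A : Matrix n n ℂ}
    (hA : ∀ t : ℝ, 0 ≤ t → ‖exp (t • A)‖ ≤ 1) {t : ℝ} (ht : 0 ≤ t) (v : n → ℂ) :
    ‖exp (t • A) *ᵥ v‖ ≤ ‖v‖ :=
  calc ‖exp (t • A) *ᵥ v‖ ≤ ‖exp (t • A)‖ * ‖v‖ := linfty_opNorm_mulVec _ _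
    _ ≤ ‖v‖ := mul_le_of_le_one_left (norm_nonneg v) (hA t ht)

lemma hasDerivAt_exp_sub_smul_mulVec {A : Matrix n n ℂ} {u : ℝ → n → ℂ} {f : n → ℂ}
    {t : ℝ} (c : ℝ) (hu : HasDerivAt u (A *ᵥ u t + f) t) :
    HasDerivAt (fun τ => exp ((c - τ) • A) *ᵥ u τ) (exp ((c - t) • A) *ᵥ f) t := by
  have hexp : HasDerivAt (fun τ : ℝ => exp ((c - τ) • A)) ((-1 : ℝ) • (exp ((c - t) • A) * A))
      t :=
    (hasDerivAt_exp_smul_const (𝕂 := ℝ) A (c - t)).scomp t ((hasDerivAt_id t).const_sub c)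
  have hmul : HasDerivAt (fun τ => Matrix.mulVecCLM (exp ((c - τ) • A)))
      (Matrix.mulVecCLM ((-1 : ℝ) • (exp ((c - t) • A) * A))) t :=
    Matrix.mulVecCLM.hasFDerivAt.comp_hasDerivAt t hexp
  refine (hmul.clm_apply hu).congr_deriv ?_
  simp only [Matrix.mulVecCLM_apply, neg_one_smul, Matrix.neg_mulVec, ← Matrix.mulVec_mulVec,
    Matrix.mulVec_add]
  abel

theorem norm_exp_smul_mulVec_sub_le {A : Matrix n n ℂ}
    (hA : ∀ t : ℝ, 0 ≤ t → ‖exp (t • A)‖ ≤ 1) {u f : ℝ → n → ℂ} {a k K : ℝ} (hk : 0 ≤ k)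
    (hu : ∀ t ∈ Icc a (a + k), HasDerivAt u (A *ᵥ u t + f t) t)
    (hf : ∀ t ∈ Icc a (a + k), ‖f t‖ ≤ K) :
    ‖exp (k • A) *ᵥ u a - u (a + k)‖ ≤ K * k := by
  set v : ℝ → n → ℂ := fun τ => exp ((a + k - τ) • A) *ᵥ u τ
  have hv : ∀ t ∈ Icc a (a + k), HasDerivWithinAt v (exp ((a + k - t) • A) *ᵥ f t)
      (Icc a (a + k)) t := fun t ht =>
    (hasDerivAt_exp_sub_smul_mulVec (a + k) (hu t ht)).hasDerivWithinAt
  have hv' : ∀ t ∈ Ico a (a + k), ‖exp ((a + k - t) • A) *ᵥ f t‖ ≤ K := fun t ht =>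
    (norm_exp_smul_mulVec_le hA (by linarith [ht.2]) _).trans (hf t (Ico_subset_Icc_self ht))
  have := norm_image_sub_le_of_norm_deriv_le_segment' hv hv' (a + k) (by simp [hk])
  rw [← norm_neg, neg_sub]
  simpa [v] using this

end ExponentialPropagator

theorem norm_lawsonStep_sub_exp_mulVec_le {s N : ℕ} (tab : RKTableau s)
    {A : Matrix (Fin N) (Fin N) ℂ} (hA : ∀ t : ℝ, 0 ≤ t → ‖exp (t • A)‖ ≤ 1) {k : ℝ}
    (hk : 0 ≤ k) {F : ℝ → (Fin N → ℂ) → Fin N → ℂ} {β : ℝ → Fin N → ℂ} {M : ℝ}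
    (hF : ∀ t x, ‖β t + F t x‖ ≤ M) (t : ℝ) (U : Fin N → ℂ) :
    ‖lawsonStep tab A k F β t U - exp (k • A) *ᵥ U‖ ≤ k * ((∑ i, |tab.b i|) * M) := by
  rw [lawsonStep, add_sub_cancel_left, norm_smul, Real.norm_of_nonneg hk, Finset.sum_mul]
  gcongr
  refine (norm_sum_le _ _).trans (Finset.sum_le_sum fun i _ => ?_)
  rw [norm_smul, Real.norm_eq_abs]
  gcongr
  exact (norm_exp_smul_mulVec_le hA (mul_nonneg (sub_nonneg.2 (tab.c_le_one i)) hk) _).trans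
    (hF _ _)

theorem classical_local_error_order_one_general {s : ℕ} (tab : RKTableau s) (M : ℝ) :
    ∃ C : ℝ, ∀ (N : ℕ) (A : Matrix (Fin N) (Fin N) ℂ),
      (∀ t : ℝ, 0 ≤ t → ‖NormedSpace.exp (t • A)‖ ≤ 1) →
      ∀ T : ℝ, 0 < T → ∀ ε : ℝ, 0 ≤ ε → ε ≤ 1 →
      ∀ F : ℝ → (Fin N → ℂ) → Fin N → ℂ, (∀ t x, ‖F t x‖ ≤ M) →
      ∀ u d : ℝ → Fin N → ℂ,
        (∀ t ∈ Set.Icc (0:ℝ) T, HasDerivAt u (A.mulVec (u t) + F t (u t) + d t) t) →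
        (∀ t ∈ Set.Icc (0:ℝ) T, ‖A.mulVec (u t) + F t (u t) + d t‖ ≤ M) →
        (∀ t ∈ Set.Icc (0:ℝ) T, ‖d t‖ ≤ ε) →
      ∀ k : ℝ, 0 < k → k ≤ 1 →
      ∀ tn : ℝ, tn ∈ Set.Icc (0:ℝ) T → tn + k ∈ Set.Icc (0:ℝ) T →
        ‖lawsonStep tab A k F (fun _ => 0) tn (u tn) - u (tn + k)‖ ≤ C * k := by
  refine ⟨(∑ i, |tab.b i|) * M + (M + 1), ?_⟩
  intro N A hA T _ ε _ hε F hF u d hu _ hd k hk _ tn htn htnk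
  have hIcc : Icc tn (tn + k) ⊆ Icc 0 T := Icc_subset_Icc htn.1 htnk.2
  have hstep : ‖lawsonStep tab A k F (fun _ => 0) tn (u tn) - exp (k • A) *ᵥ u tn‖ ≤
      k * ((∑ i, |tab.b i|) * M) :=
    norm_lawsonStep_sub_exp_mulVec_le tab hA hk.le (fun t x => by simpa using hF t x) tn (u tn)
  have hflow : ‖exp (k • A) *ᵥ u tn - u (tn + k)‖ ≤ (M + 1) * k :=
    norm_exp_smul_mulVec_sub_le hA hk.le (f := fun t => F t (u t) + d t)
      (fun t ht => by simpa only [add_assoc] using hu t (hIcc ht))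
      (fun t ht => (norm_add_le _ _).trans (by linarith [hF t (u t), hd t (hIcc ht)]))
  calc _ ≤ _ := norm_sub_le_norm_sub_add_norm_sub _ (exp (k • A) *ᵥ u tn) _
    _ ≤ _ := add_le_add hstep hflow
    _ = _ := by ring

/-- Classical Lawson local error, vanishing boundary conditions: local order 1.
There is a constant `C` depending only on the tableau and `M` (independent of `N`, `A`, `k`
and `ε`) such that one Lawson step with `β ≡ 0` from the exact value `u(t_n)` satisfies
`‖U⁺ − u(t_n + k)‖ ≤ C·k`. -/
theorem classical_local_error_order_one {s : ℕ} (tab : RKTableau s) (M : ℝ) (hM : 0 ≤ M) :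
    ∃ C : ℝ, ∀ (N : ℕ) (A : Matrix (Fin N) (Fin N) ℂ),
      (∀ t : ℝ, 0 ≤ t → ‖NormedSpace.exp (t • A)‖ ≤ 1) →
      ∀ T : ℝ, 0 < T → ∀ ε : ℝ, 0 ≤ ε → ε ≤ 1 →
      ∀ F : ℝ → (Fin N → ℂ) → Fin N → ℂ, (∀ t x, ‖F t x‖ ≤ M) →
      ∀ u d : ℝ → Fin N → ℂ,
        (∀ t ∈ Set.Icc (0:ℝ) T, HasDerivAt u (A.mulVec (u t) + F t (u t) + d t) t) →
        (∀ t ∈ Set.Icc (0:ℝ) T, ‖A.mulVec (u t) + F t (u t) + d t‖ ≤ M) →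
        (∀ t ∈ Set.Icc (0:ℝ) T, ‖d t‖ ≤ ε) →
      ∀ k : ℝ, 0 < k → k ≤ 1 →
      ∀ tn : ℝ, tn ∈ Set.Icc (0:ℝ) T → tn + k ∈ Set.Icc (0:ℝ) T →
        ‖lawsonStep tab A k F (fun _ => 0) tn (u tn) - u (tn + k)‖ ≤ C * k :=
  classical_local_error_order_one_general tab M
end

section
/- Let A be an invertible N×N complex matrix with ‖exp(tA)‖ ≤ 1 for all t ≥ 0, ‖A⁻¹‖ ≤ C₁ and ‖τ·A·exp(τA)‖ ≤ C₄ for all τ ≥ 0. Fix an explicit s-stage Runge–Kutta tableau whose nodes satisfy 0 ≤ c₁ < c₂ < ⋯ < c_s ≤ 1 and c_i ≠ 1 for every i. Let T > 0, M, C₃ ≥ 0, 0 ≤ ε ≤ 1, let F : ℝ × ℂ^N → ℂ^N satisfy ‖F(t,x)‖ ≤ M, let β : [0,T] → ℂ^N satisfy ‖A⁻¹β(t)‖ ≤ C₃, and let u, d : [0,T] → ℂ^N with u differentiable, u′(t) = A·u(t) + β(t) + F(t,u(t)) + d(t), ‖u(t)‖ ≤ M and ‖d(t)‖ ≤ ε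 for all t ∈ [0,T]. Then there exists a constant C, depending only on the tableau, M, C₁, C₃ and C₄ (in particular independent of N, A, k and ε), such that for every k ∈ (0,1] and every t_n with t_n, t_n + k ∈ [0,T], the Lawson step with boundary data β from U = u(t_n) at time t_n satisfies both ‖U⁺ − u(t_n + k)‖ ≤ C and ‖A⁻¹(U⁺ − u(t_n + k))‖ ≤ C·k. -/
/-!
The stages never enter the estimates, because `F` is bounded uniformly. Without `A⁻¹`, every term
of `U⁺` is bounded: `e^{τA}` is a contraction for `τ ≥ 0`, and a boundary term is rewritten as
`k e^{(1-c_i)kA} β = (1-c_i)⁻¹ (τ A e^{τA}) (A⁻¹ β)` with `τ = (1-c_i)k`, which is where `c_i ≠ 1`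
is needed. After applying `A⁻¹`, which commutes with `e^{τA}`, the weighted sum is `O(k)` at once,
`e^{kA}A⁻¹u - A⁻¹u = O(k)` because `A (A⁻¹u) = u` is bounded, and
`A⁻¹u(t_n) - A⁻¹u(t_n+k) = O(k)` by the mean value theorem, since
`A⁻¹u' = u + A⁻¹β + A⁻¹F + A⁻¹d` is bounded.
-/

open MeasureTheory Matrix

attribute [local instance] Matrix.linftyOpNormedAddCommGroup Matrix.linftyOpNormedRing
  Matrix.linftyOpNormedAlgebra

open Set

section Derivatives

variable {N : ℕ} {t : ℝ}

theorem HasDerivAt.const_mulVec (B : Matrix (Fin N) (Fin N) ℂ) {u : ℝ → Fin N → ℂ}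
    {u' : Fin N → ℂ} (hu : HasDerivAt u u' t) :
    HasDerivAt (fun t => B *ᵥ u t) (B *ᵥ u') t :=
  ((LinearMap.toContinuousLinearMap (mulVecLin B)).restrictScalars ℝ).hasFDerivAt.comp_hasDerivAt
    t hu

theorem HasDerivAt.mulVec_const {P : ℝ → Matrix (Fin N) (Fin N) ℂ}
    {P' : Matrix (Fin N) (Fin N) ℂ} (hP : HasDerivAt P P' t) (w : Fin N → ℂ) :
    HasDerivAt (fun t => P t *ᵥ w) (P' *ᵥ w) t := by
  exact ((LinearMap.toContinuousLinearMap
    ((LinearMap.applyₗ w).comp (Matrix.toLin' (R := ℂ) (n := Fin N)).toLinearMap)).restrictScalars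
      ℝ).hasFDerivAt.comp_hasDerivAt t hP

end Derivatives

namespace Matrix

theorem norm_mulVec_le_of_le {m n α : Type*} [Fintype m] [Fintype n]
    [NonUnitalNormedRing α] {B : Matrix m n α} {v : n → α} {C M : ℝ} (hB : ‖B‖ ≤ C)
    (hv : ‖v‖ ≤ M) : ‖B *ᵥ v‖ ≤ C * M :=
  (linfty_opNorm_mulVec B v).trans (mul_le_mul hB hv (norm_nonneg _) ((norm_nonneg _).trans hB))

variable {N : ℕ} {A : Matrix (Fin N) (Fin N) ℂ}

theorem inv_mulVec_exp_smul_mulVec (hA : IsUnit A.det) (τ : ℝ) (v : Fin N → ℂ) :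
    A⁻¹ *ᵥ (NormedSpace.exp (τ • A) *ᵥ v) = NormedSpace.exp (τ • A) *ᵥ (A⁻¹ *ᵥ v) := by
  have hcomm : Commute A⁻¹ A := (A.nonsing_inv_mul hA).trans (A.mul_nonsing_inv hA).symm
  rw [mulVec_mulVec, ((hcomm.smul_right τ).exp_right).eq, ← mulVec_mulVec]

theorem norm_smul_exp_smul_mulVec_le (hA : IsUnit A.det) (τ : ℝ) (v : Fin N → ℂ) :
    ‖τ • (NormedSpace.exp (τ • A) *ᵥ v)‖ ≤
      ‖τ • (A * NormedSpace.exp (τ • A))‖ * ‖A⁻¹ *ᵥ v‖ := by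
  have hfactor : τ • (NormedSpace.exp (τ • A) *ᵥ v) =
      (τ • (A * NormedSpace.exp (τ • A))) *ᵥ (A⁻¹ *ᵥ v) := by
    rw [mulVec_mulVec, ((Commute.refl A).smul_right τ).exp_right.eq, smul_mul_assoc,
      mul_nonsing_inv_cancel_right _ _ hA, smul_mulVec]
  rw [hfactor]
  exact linfty_opNorm_mulVec _ _

theorem norm_exp_smul_mulVec_sub_le
    (hexp : ∀ t : ℝ, 0 ≤ t → ‖NormedSpace.exp (t • A)‖ ≤ 1) (w : Fin N → ℂ) {k : ℝ}
    (hk : 0 ≤ k) :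
    ‖NormedSpace.exp (k • A) *ᵥ w - w‖ ≤ ‖A *ᵥ w‖ * k := by
  have hderiv : ∀ τ ∈ Icc 0 k, HasDerivWithinAt (fun τ : ℝ => NormedSpace.exp (τ • A) *ᵥ w)
      (NormedSpace.exp (τ • A) *ᵥ (A *ᵥ w)) (Icc 0 k) τ := fun τ _ => by
    rw [mulVec_mulVec]
    exact ((hasDerivAt_exp_smul_const A τ).mulVec_const w).hasDerivWithinAt
  have hbound : ∀ τ ∈ Ico 0 k, ‖NormedSpace.exp (τ • A) *ᵥ (A *ᵥ w)‖ ≤ ‖A *ᵥ w‖ :=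
    fun τ hτ => by simpa using norm_mulVec_le_of_le (hexp τ hτ.1) (le_refl ‖A *ᵥ w‖)
  simpa using norm_image_sub_le_of_norm_deriv_le_segment' hderiv hbound k ⟨hk, le_rfl⟩

theorem norm_inv_mulVec_sub_le_of_hasDerivAt (hA : IsUnit A.det) {C₁ C₃ M : ℝ}
    (hAinv : ‖A⁻¹‖ ≤ C₁) {F : ℝ → (Fin N → ℂ) → Fin N → ℂ} (hF : ∀ t x, ‖F t x‖ ≤ M)
    {β d u : ℝ → Fin N → ℂ} {a b : ℝ} (hab : a ≤ b)
    (hu : ∀ t ∈ Icc a b, HasDerivAt u (A *ᵥ u t + β t + F t (u t) + d t) t)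
    (hub : ∀ t ∈ Icc a b, ‖u t‖ ≤ M) (hβ : ∀ t ∈ Icc a b, ‖A⁻¹ *ᵥ β t‖ ≤ C₃)
    (hd : ∀ t ∈ Icc a b, ‖d t‖ ≤ 1) :
    ‖A⁻¹ *ᵥ u b - A⁻¹ *ᵥ u a‖ ≤ (M + C₃ + C₁ * M + C₁) * (b - a) := by
  have hderiv : ∀ t ∈ Icc a b, HasDerivWithinAt (fun t => A⁻¹ *ᵥ u t)
      (A⁻¹ *ᵥ (A *ᵥ u t + β t + F t (u t) + d t)) (Icc a b) t :=
    fun t ht => ((hu t ht).const_mulVec A⁻¹).hasDerivWithinAt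
  refine norm_image_sub_le_of_norm_deriv_le_segment' hderiv (fun t ht => ?_) b ⟨hab, le_rfl⟩
  have ht : t ∈ Icc a b := Ico_subset_Icc_self ht
  rw [mulVec_add, mulVec_add, mulVec_add, mulVec_mulVec, nonsing_inv_mul A hA, one_mulVec]
  have hAd : ‖A⁻¹ *ᵥ d t‖ ≤ C₁ := by simpa using norm_mulVec_le_of_le hAinv (hd t ht)
  calc _ ≤ ‖u t‖ + ‖A⁻¹ *ᵥ β t‖ + ‖A⁻¹ *ᵥ F t (u t)‖ + ‖A⁻¹ *ᵥ d t‖ :=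
        (norm_add_le _ _).trans (add_le_add_left norm_add₃_le _)
    _ ≤ M + C₃ + C₁ * M + C₁ :=
        add_le_add (add_le_add (add_le_add (hub t ht) (hβ t ht))
          (norm_mulVec_le_of_le hAinv (hF _ _))) hAd

end Matrix

section LawsonStep

variable {s N : ℕ} (tab : RKTableau s) {A : Matrix (Fin N) (Fin N) ℂ} {k : ℝ}
  {F : ℝ → (Fin N → ℂ) → Fin N → ℂ} {β : ℝ → Fin N → ℂ} {t : ℝ} {U : Fin N → ℂ}

theorem RKTableau.node_mem_Icc (i : Fin s) (hk : 0 ≤ k) :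
    t + tab.c i * k ∈ Icc t (t + k) :=
  ⟨le_add_of_nonneg_right (mul_nonneg (tab.c_nonneg i) hk),
    (add_le_add_iff_left t).2 (mul_le_of_le_one_left hk (tab.c_le_one i))⟩

theorem norm_smul_exp_mulVec_add_le (hA : IsUnit A.det)
    (hexp : ∀ t : ℝ, 0 ≤ t → ‖NormedSpace.exp (t • A)‖ ≤ 1) {C₃ C₄ M : ℝ}
    (hC₄ : ∀ τ : ℝ, 0 ≤ τ → ‖τ • (A * NormedSpace.exp (τ • A))‖ ≤ C₄)
    {θ : ℝ} (hθ : 0 < θ) (hk0 : 0 ≤ k) (hk1 : k ≤ 1) {x y : Fin N → ℂ}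
    (hx : ‖A⁻¹ *ᵥ x‖ ≤ C₃) (hy : ‖y‖ ≤ M) :
    ‖k • (NormedSpace.exp ((θ * k) • A) *ᵥ (x + y))‖ ≤ C₄ * C₃ / θ + M := by
  have hτ : 0 ≤ θ * k := mul_nonneg hθ.le hk0
  have hx' : ‖k • (NormedSpace.exp ((θ * k) • A) *ᵥ x)‖ ≤ C₄ * C₃ / θ := by
    have hrescale : k • (NormedSpace.exp ((θ * k) • A) *ᵥ x) =
        θ⁻¹ • ((θ * k) • (NormedSpace.exp ((θ * k) • A) *ᵥ x)) := by
      rw [smul_smul, inv_mul_cancel_left₀ hθ.ne']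
    rw [hrescale, norm_smul, norm_inv, Real.norm_of_nonneg hθ.le, inv_mul_le_iff₀ hθ,
      mul_div_cancel₀ _ hθ.ne']
    refine (norm_smul_exp_smul_mulVec_le hA _ x).trans ?_
    exact mul_le_mul (hC₄ _ hτ) hx (norm_nonneg _) ((norm_nonneg _).trans (hC₄ _ hτ))
  have hy' : ‖k • (NormedSpace.exp ((θ * k) • A) *ᵥ y)‖ ≤ M := by
    rw [norm_smul, Real.norm_of_nonneg hk0]
    calc k * ‖NormedSpace.exp ((θ * k) • A) *ᵥ y‖
        ≤ ‖NormedSpace.exp ((θ * k) • A) *ᵥ y‖ := mul_le_of_le_one_left (norm_nonneg _) hk1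
      _ ≤ M := by simpa using norm_mulVec_le_of_le (hexp _ hτ) hy
  rw [mulVec_add, smul_add]
  exact (norm_add_le _ _).trans (add_le_add hx' hy')

theorem norm_lawsonStep_le (hA : IsUnit A.det)
    (hexp : ∀ t : ℝ, 0 ≤ t → ‖NormedSpace.exp (t • A)‖ ≤ 1) {C₃ C₄ M : ℝ}
    (hC₄ : ∀ τ : ℝ, 0 ≤ τ → ‖τ • (A * NormedSpace.exp (τ • A))‖ ≤ C₄)
    (hc : ∀ i, tab.c i < 1) (hk0 : 0 ≤ k) (hk1 : k ≤ 1) (hF : ∀ t x, ‖F t x‖ ≤ M)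
    (hβ : ∀ i, ‖A⁻¹ *ᵥ β (t + tab.c i * k)‖ ≤ C₃) :
    ‖lawsonStep tab A k F β t U‖ ≤
      ‖U‖ + ∑ i, |tab.b i| * (C₄ * C₃ / (1 - tab.c i) + M) := by
  rw [lawsonStep, Finset.smul_sum]
  refine (norm_add_le _ _).trans (add_le_add ?_ ((norm_sum_le _ _).trans
    (Finset.sum_le_sum fun i _ => ?_)))
  · simpa using norm_mulVec_le_of_le (hexp k hk0) (le_refl ‖U‖)
  · rw [smul_comm, norm_smul, Real.norm_eq_abs]
    exact mul_le_mul_of_nonneg_left (norm_smul_exp_mulVec_add_le hA hexp hC₄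
      (sub_pos.2 (hc i)) hk0 hk1 (hβ i) (hF _ _)) (abs_nonneg _)

theorem inv_mulVec_lawsonStep (hA : IsUnit A.det) :
    A⁻¹ *ᵥ lawsonStep tab A k F β t U =
      NormedSpace.exp (k • A) *ᵥ (A⁻¹ *ᵥ U) +
        k • ∑ i, tab.b i • NormedSpace.exp (((1 - tab.c i) * k) • A) *ᵥ
          (A⁻¹ *ᵥ (β (t + tab.c i * k) +
            F (t + tab.c i * k) (lawsonStages tab A k F β t U i))) := by
  simp only [lawsonStep, mulVec_add, mulVec_smul, mulVec_sum, inv_mulVec_exp_smul_mulVec hA]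

theorem norm_inv_mulVec_lawsonStep_sub_le (hA : IsUnit A.det)
    (hexp : ∀ t : ℝ, 0 ≤ t → ‖NormedSpace.exp (t • A)‖ ≤ 1) {C₁ C₃ M : ℝ}
    (hAinv : ‖A⁻¹‖ ≤ C₁) (hk0 : 0 ≤ k) (hF : ∀ t x, ‖F t x‖ ≤ M)
    (hβ : ∀ i, ‖A⁻¹ *ᵥ β (t + tab.c i * k)‖ ≤ C₃) :
    ‖A⁻¹ *ᵥ lawsonStep tab A k F β t U - NormedSpace.exp (k • A) *ᵥ (A⁻¹ *ᵥ U)‖ ≤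
      (∑ i, |tab.b i|) * (C₃ + C₁ * M) * k := by
  rw [inv_mulVec_lawsonStep tab hA, add_sub_cancel_left, norm_smul, Real.norm_of_nonneg hk0,
    mul_comm _ k, Finset.sum_mul]
  refine mul_le_mul_of_nonneg_left ((norm_sum_le _ _).trans
    (Finset.sum_le_sum fun i _ => ?_)) hk0
  have hτ : 0 ≤ (1 - tab.c i) * k := mul_nonneg (sub_nonneg.2 (tab.c_le_one i)) hk0
  rw [norm_smul, Real.norm_eq_abs]
  have hsum : ‖A⁻¹ *ᵥ (β (t + tab.c i * k) +
      F (t + tab.c i * k) (lawsonStages tab A k F β t U i))‖ ≤ C₃ + C₁ * M := by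
    rw [mulVec_add]
    exact (norm_add_le _ _).trans (add_le_add (hβ i) (norm_mulVec_le_of_le hAinv (hF _ _)))
  simpa using mul_le_mul_of_nonneg_left (norm_mulVec_le_of_le (hexp _ hτ) hsum) (abs_nonneg _)

theorem norm_lawsonStep_sub_le (hA : IsUnit A.det)
    (hexp : ∀ t : ℝ, 0 ≤ t → ‖NormedSpace.exp (t • A)‖ ≤ 1) {C₃ C₄ M : ℝ}
    (hC₄ : ∀ τ : ℝ, 0 ≤ τ → ‖τ • (A * NormedSpace.exp (τ • A))‖ ≤ C₄)
    (hc : ∀ i, tab.c i < 1) (hk0 : 0 ≤ k) (hk1 : k ≤ 1) (hF : ∀ t x, ‖F t x‖ ≤ M)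
    (hβ : ∀ i, ‖A⁻¹ *ᵥ β (t + tab.c i * k)‖ ≤ C₃) {V : Fin N → ℂ} (hU : ‖U‖ ≤ M)
    (hV : ‖V‖ ≤ M) :
    ‖lawsonStep tab A k F β t U - V‖ ≤
      2 * M + ∑ i, |tab.b i| * (C₄ * C₃ / (1 - tab.c i) + M) := by
  have hstep := norm_lawsonStep_le tab hA hexp hC₄ hc hk0 hk1 hF hβ (U := U)
  linarith [norm_sub_le (lawsonStep tab A k F β t U) V]

theorem norm_inv_mulVec_lawsonStep_sub_le_of_hasDerivAt (hA : IsUnit A.det)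
    (hexp : ∀ t : ℝ, 0 ≤ t → ‖NormedSpace.exp (t • A)‖ ≤ 1) {C₁ C₃ M : ℝ}
    (hAinv : ‖A⁻¹‖ ≤ C₁) (hk0 : 0 ≤ k) (hF : ∀ t x, ‖F t x‖ ≤ M) {d u : ℝ → Fin N → ℂ}
    (hu : ∀ τ ∈ Icc t (t + k), HasDerivAt u (A *ᵥ u τ + β τ + F τ (u τ) + d τ) τ)
    (hub : ∀ τ ∈ Icc t (t + k), ‖u τ‖ ≤ M) (hβ : ∀ τ ∈ Icc t (t + k), ‖A⁻¹ *ᵥ β τ‖ ≤ C₃)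
    (hd : ∀ τ ∈ Icc t (t + k), ‖d τ‖ ≤ 1) :
    ‖A⁻¹ *ᵥ (lawsonStep tab A k F β t (u t) - u (t + k))‖ ≤
      (2 * M + C₃ + C₁ * M + C₁ + (∑ i, |tab.b i|) * (C₃ + C₁ * M)) * k := by
  set w := A⁻¹ *ᵥ u t
  have hAw : A *ᵥ w = u t := by rw [mulVec_mulVec, mul_nonsing_inv A hA, one_mulVec]
  have hsplit : A⁻¹ *ᵥ (lawsonStep tab A k F β t (u t) - u (t + k)) =
      (NormedSpace.exp (k • A) *ᵥ w - w) + (w - A⁻¹ *ᵥ u (t + k)) +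
        (A⁻¹ *ᵥ lawsonStep tab A k F β t (u t) - NormedSpace.exp (k • A) *ᵥ w) := by
    rw [mulVec_sub]; abel
  have hflow : ‖NormedSpace.exp (k • A) *ᵥ w - w‖ ≤ M * k := by
    refine (norm_exp_smul_mulVec_sub_le hexp w hk0).trans ?_
    rw [hAw]
    exact mul_le_mul_of_nonneg_right (hub t ⟨le_rfl, le_add_of_nonneg_right hk0⟩) hk0
  have hdrift : ‖w - A⁻¹ *ᵥ u (t + k)‖ ≤ (M + C₃ + C₁ * M + C₁) * k := by
    rw [norm_sub_rev]
    simpa using norm_inv_mulVec_sub_le_of_hasDerivAt hA hAinv hF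
      (le_add_of_nonneg_right hk0) hu hub hβ hd
  have hnodes := fun i => hβ _ (tab.node_mem_Icc i hk0)
  rw [hsplit]
  calc _ ≤ _ := norm_add₃_le
    _ ≤ M * k + (M + C₃ + C₁ * M + C₁) * k + (∑ i, |tab.b i|) * (C₃ + C₁ * M) * k :=
      add_le_add (add_le_add hflow hdrift)
        (norm_inv_mulVec_lawsonStep_sub_le tab hA hexp hAinv hk0 hF hnodes)
    _ = _ := by ring

end LawsonStep

theorem classical_local_error_nonvanishing_general {s : ℕ} (tab : RKTableau s)
    (hc1 : ∀ i, tab.c i ≠ 1)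
    (M C₁ C₃ C₄ : ℝ) :
    ∃ C : ℝ, ∀ (N : ℕ) (A : Matrix (Fin N) (Fin N) ℂ), IsUnit A.det →
      (∀ t : ℝ, 0 ≤ t → ‖NormedSpace.exp (t • A)‖ ≤ 1) → ‖A⁻¹‖ ≤ C₁ →
      (∀ τ : ℝ, 0 ≤ τ → ‖τ • (A * NormedSpace.exp (τ • A))‖ ≤ C₄) →
      ∀ T : ℝ, 0 < T → ∀ ε : ℝ, 0 ≤ ε → ε ≤ 1 →
      ∀ F : ℝ → (Fin N → ℂ) → Fin N → ℂ, (∀ t x, ‖F t x‖ ≤ M) →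
      ∀ β : ℝ → Fin N → ℂ, (∀ t ∈ Set.Icc (0:ℝ) T, ‖A⁻¹.mulVec (β t)‖ ≤ C₃) →
      ∀ u d : ℝ → Fin N → ℂ,
        (∀ t ∈ Set.Icc (0:ℝ) T,
          HasDerivAt u (A.mulVec (u t) + β t + F t (u t) + d t) t) →
        (∀ t ∈ Set.Icc (0:ℝ) T, ‖u t‖ ≤ M) →
        (∀ t ∈ Set.Icc (0:ℝ) T, ‖d t‖ ≤ ε) →
      ∀ k : ℝ, 0 < k → k ≤ 1 →
      ∀ tn : ℝ, tn ∈ Set.Icc (0:ℝ) T → tn + k ∈ Set.Icc (0:ℝ) T →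
        ‖lawsonStep tab A k F β tn (u tn) - u (tn + k)‖ ≤ C ∧
        ‖A⁻¹.mulVec (lawsonStep tab A k F β tn (u tn) - u (tn + k))‖ ≤ C * k := by
  have hc : ∀ i, tab.c i < 1 := fun i => (tab.c_le_one i).lt_of_ne (hc1 i)
  refine ⟨max (2 * M + ∑ i, |tab.b i| * (C₄ * C₃ / (1 - tab.c i) + M))
    (2 * M + C₃ + C₁ * M + C₁ + (∑ i, |tab.b i|) * (C₃ + C₁ * M)), ?_⟩
  intro N A hA hexp hAinv hC₄ T _ ε _ hε1 F hF β hβ u d hu hub hd k hk0 hk1 tn htn htnk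
  have hstep : Icc tn (tn + k) ⊆ Icc 0 T := Icc_subset_Icc htn.1 htnk.2
  refine ⟨?_, ?_⟩
  · refine (norm_lawsonStep_sub_le tab hA hexp hC₄ hc hk0.le hk1 hF
      (fun i => hβ _ (hstep (tab.node_mem_Icc i hk0.le))) (hub tn htn) (hub _ htnk)).trans ?_
    exact le_max_left _ _
  · refine (norm_inv_mulVec_lawsonStep_sub_le_of_hasDerivAt tab hA hexp hAinv hk0.le hF
      (fun t ht => hu t (hstep ht)) (fun t ht => hub t (hstep ht)) (fun t ht => hβ t (hstep ht))
      (fun t ht => (hd t (hstep ht)).trans hε1)).trans ?_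
    exact mul_le_mul_of_nonneg_right (le_max_right _ _) hk0.le

/-- Classical Lawson local error, non-vanishing boundary conditions, strictly increasing nodes
with `c_i ≠ 1` for all `i`: `‖U⁺ − u(t_n+k)‖ ≤ C` and `‖A⁻¹(U⁺ − u(t_n+k))‖ ≤ C·k`, where `C`
depends only on the tableau, `M`, `C₁`, `C₃` and `C₄` (independent of `N`, `A`, `k`, `ε`). -/
theorem classical_local_error_nonvanishing {s : ℕ} (tab : RKTableau s)
    (hc : StrictMono tab.c) (hc1 : ∀ i, tab.c i ≠ 1)
    (M C₁ C₃ C₄ : ℝ) (hM : 0 ≤ M) (hC₁ : 0 ≤ C₁) (hC₃ : 0 ≤ C₃) (hC₄ : 0 ≤ C₄) :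
    ∃ C : ℝ, ∀ (N : ℕ) (A : Matrix (Fin N) (Fin N) ℂ), IsUnit A.det →
      (∀ t : ℝ, 0 ≤ t → ‖NormedSpace.exp (t • A)‖ ≤ 1) → ‖A⁻¹‖ ≤ C₁ →
      (∀ τ : ℝ, 0 ≤ τ → ‖τ • (A * NormedSpace.exp (τ • A))‖ ≤ C₄) →
      ∀ T : ℝ, 0 < T → ∀ ε : ℝ, 0 ≤ ε → ε ≤ 1 →
      ∀ F : ℝ → (Fin N → ℂ) → Fin N → ℂ, (∀ t x, ‖F t x‖ ≤ M) →
      ∀ β : ℝ → Fin N → ℂ, (∀ t ∈ Set.Icc (0:ℝ) T, ‖A⁻¹.mulVec (β t)‖ ≤ C₃) →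
      ∀ u d : ℝ → Fin N → ℂ,
        (∀ t ∈ Set.Icc (0:ℝ) T,
          HasDerivAt u (A.mulVec (u t) + β t + F t (u t) + d t) t) →
        (∀ t ∈ Set.Icc (0:ℝ) T, ‖u t‖ ≤ M) →
        (∀ t ∈ Set.Icc (0:ℝ) T, ‖d t‖ ≤ ε) →
      ∀ k : ℝ, 0 < k → k ≤ 1 →
      ∀ tn : ℝ, tn ∈ Set.Icc (0:ℝ) T → tn + k ∈ Set.Icc (0:ℝ) T →
        ‖lawsonStep tab A k F β tn (u tn) - u (tn + k)‖ ≤ C ∧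
        ‖A⁻¹.mulVec (lawsonStep tab A k F β tn (u tn) - u (tn + k))‖ ≤ C * k :=
  classical_local_error_nonvanishing_general tab hc1 M C₁ C₃ C₄
end

section
/- Let A be an N×N complex matrix with ‖exp(tA)‖ ≤ 1 for all t ≥ 0, let k > 0, ε ≥ 0, and let g : [0,k] → ℂ^N be continuous. Let p, q : [0,k] → ℂ^N with p differentiable, p′(s) = A·q(s) + g(s) and ‖A·(p(s) − q(s))‖ ≤ ε for all s ∈ [0,k], and let W : [0,k] → ℂ^N be differentiable with W′(s) = A·W(s) + g(s) for all s ∈ [0,k]. Then for every s ∈ [0,k], ‖W(s) − p(s)‖ ≤ ‖W(0) − p(0)‖ + s·ε. -/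
open Matrix

attribute [local instance] Matrix.linftyOpNormedAddCommGroup Matrix.linftyOpNormedRing
  Matrix.linftyOpNormedAlgebra

/-! Duhamel's principle: with `E = W - p` one has `E' = A E + A (p - q)`, so
`τ ↦ exp((s - τ) A) E(τ)` has derivative `exp((s - τ) A) A (p - q)(τ)`, of norm at most `ε` since
the semigroup is contractive. The mean value inequality on `[0, s]` then compares its values
`E(s)` at `τ = s` and `exp(s A) E(0)` at `τ = 0`. -/

open NormedSpace Set

theorem hasDerivAt_exp_sub_smul_const {𝕂 𝔸 : Type*} [RCLike 𝕂] [NormedRing 𝔸]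
    [NormedAlgebra 𝕂 𝔸] [CompleteSpace 𝔸] (A : 𝔸) (s t : 𝕂) :
    HasDerivAt (fun u : 𝕂 => exp ((s - u) • A)) (-(exp ((s - t) • A) * A)) t := by
  simpa [Function.comp_def] using
    (hasDerivAt_exp_smul_const A (s - t)).scomp t ((hasDerivAt_id t).const_sub s)

namespace Matrix

variable {n 𝕜 : Type*} [Fintype n] [DecidableEq n] [RCLike 𝕜]

noncomputable def mulVecBilinL : Matrix n n 𝕜 →L[ℝ] (n → 𝕜) →L[ℝ] (n → 𝕜) :=
  (mulVecBilin ℝ ℝ).mkContinuous₂ 1 fun M v => by simpa using linfty_opNorm_mulVec M v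

theorem _root_.HasDerivAt.mulVec {M : ℝ → Matrix n n 𝕜} {v : ℝ → n → 𝕜} {M' : Matrix n n 𝕜}
    {v' : n → 𝕜} {t : ℝ} (hM : HasDerivAt M M' t) (hv : HasDerivAt v v' t) :
    HasDerivAt (fun τ => M τ *ᵥ v τ) (M t *ᵥ v' + M' *ᵥ v t) t :=
  mulVecBilinL.hasDerivAt_of_bilinear (fun _ => hM) (fun _ => hv)

theorem norm_le_add_mul_of_hasDerivAt_mulVec_add {A : Matrix n n 𝕜}
    (hA : ∀ t : ℝ, 0 ≤ t → ‖exp (t • A)‖ ≤ 1) {f r : ℝ → n → 𝕜} {s ε : ℝ} (hs : 0 ≤ s)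
    (hf : ∀ τ ∈ Icc 0 s, HasDerivAt f (A *ᵥ f τ + r τ) τ) (hr : ∀ τ ∈ Icc 0 s, ‖r τ‖ ≤ ε) :
    ‖f s‖ ≤ ‖f 0‖ + s * ε := by
  have hcontr (t : ℝ) (ht : 0 ≤ t) (v : n → 𝕜) : ‖exp (t • A) *ᵥ v‖ ≤ ‖v‖ :=
    (linfty_opNorm_mulVec _ v).trans (mul_le_of_le_one_left (norm_nonneg v) (hA t ht))
  set y : ℝ → n → 𝕜 := fun τ => exp ((s - τ) • A) *ᵥ f τ
  have hy : ∀ τ ∈ Icc 0 s, HasDerivAt y (exp ((s - τ) • A) *ᵥ r τ) τ := fun τ hτ =>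
    ((hasDerivAt_exp_sub_smul_const A s τ).mulVec (hf τ hτ)).congr_deriv <| by
      simp only [mulVec_add, neg_mulVec, mulVec_mulVec]
      abel
  have hy_le : ∀ τ ∈ Ico 0 s, ‖exp ((s - τ) • A) *ᵥ r τ‖ ≤ ε := fun τ hτ =>
    (hcontr _ (sub_nonneg.2 hτ.2.le) _).trans (hr τ (Ico_subset_Icc_self hτ))
  have hmvt : ‖f s - y 0‖ ≤ ε * (s - 0) := by
    simpa [y] using norm_image_sub_le_of_norm_deriv_le_segment'
      (fun τ hτ => (hy τ hτ).hasDerivWithinAt) hy_le s (right_mem_Icc.2 hs)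
  have hy0 : ‖y 0‖ ≤ ‖f 0‖ := by simpa [y] using hcontr s hs (f 0)
  linarith [norm_sub_norm_le (f s) (y 0)]

end Matrix

theorem comparison_estimate_general {N : ℕ} (A : Matrix (Fin N) (Fin N) ℂ)
    (hA : ∀ t : ℝ, 0 ≤ t → ‖NormedSpace.exp (t • A)‖ ≤ 1)
    (k : ℝ) (ε : ℝ)
    (g p q W : ℝ → Fin N → ℂ)
    (hp : ∀ s ∈ Set.Icc (0:ℝ) k, HasDerivAt p (A.mulVec (q s) + g s) s)
    (hpq : ∀ s ∈ Set.Icc (0:ℝ) k, ‖A.mulVec (p s - q s)‖ ≤ ε)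
    (hW : ∀ s ∈ Set.Icc (0:ℝ) k, HasDerivAt W (A.mulVec (W s) + g s) s) :
    ∀ s ∈ Set.Icc (0:ℝ) k, ‖W s - p s‖ ≤ ‖W 0 - p 0‖ + s * ε := by
  intro s ⟨hs0, hsk⟩
  have hsub : Icc 0 s ⊆ Icc 0 k := Icc_subset_Icc_right hsk
  refine norm_le_add_mul_of_hasDerivAt_mulVec_add hA hs0 (f := W - p)
    (r := fun τ => A *ᵥ (p τ - q τ)) (fun τ hτ => ?_) (fun τ hτ => hpq τ (hsub hτ))
  refine ((hW τ (hsub hτ)).sub (hp τ (hsub hτ))).congr_deriv ?_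
  simp only [Pi.sub_apply, mulVec_sub]
  abel

/-- Comparison estimate: if `‖exp(tA)‖ ≤ 1` for `t ≥ 0`, `g` is continuous on `[0,k]`,
`p′(s) = A·q(s) + g(s)` with `‖A·(p(s) − q(s))‖ ≤ ε` on `[0,k]`, and `W′(s) = A·W(s) + g(s)`
on `[0,k]`, then `‖W(s) − p(s)‖ ≤ ‖W(0) − p(0)‖ + s·ε` for every `s ∈ [0,k]`. -/
theorem comparison_estimate {N : ℕ} (A : Matrix (Fin N) (Fin N) ℂ)
    (hA : ∀ t : ℝ, 0 ≤ t → ‖NormedSpace.exp (t • A)‖ ≤ 1)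
    (k : ℝ) (hk : 0 < k) (ε : ℝ) (hε : 0 ≤ ε)
    (g p q W : ℝ → Fin N → ℂ)
    (hg : ContinuousOn g (Set.Icc (0:ℝ) k))
    (hp : ∀ s ∈ Set.Icc (0:ℝ) k, HasDerivAt p (A.mulVec (q s) + g s) s)
    (hpq : ∀ s ∈ Set.Icc (0:ℝ) k, ‖A.mulVec (p s - q s)‖ ≤ ε)
    (hW : ∀ s ∈ Set.Icc (0:ℝ) k, HasDerivAt W (A.mulVec (W s) + g s) s) :
    ∀ s ∈ Set.Icc (0:ℝ) k, ‖W s - p s‖ ≤ ‖W 0 - p 0‖ + s * ε :=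
  comparison_estimate_general A hA k ε g p q W hp hpq hW
end

section
/- Fix N ≥ 1, set h = 1/(N+1), and let A be the N×N real tridiagonal matrix with diagonal entries A_{ii} = −2/h², off-diagonal entries A_{i,i+1} = A_{i+1,i} = 1/h², and all other entries 0. Then A is invertible and ‖A⁻¹‖_∞ ≤ 1/8, where ‖·‖_∞ denotes the operator norm on N×N matrices induced by the maximum norm on ℝ^N. -/
open Matrix

attribute [local instance] Matrix.linftyOpNormedAddCommGroup Matrix.linftyOpNormedRing
  Matrix.linftyOpNormedAlgebra

/-- The `N × N` tridiagonal matrix `(1/h²)·tridiag(1, −2, 1)`: the standard second-order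
finite-difference discretization of the 1D Laplacian with homogeneous Dirichlet conditions. -/
noncomputable def dirichletLaplacian (N : ℕ) (h : ℝ) : Matrix (Fin N) (Fin N) ℝ :=
  Matrix.of fun i j =>
    if (i : ℕ) = (j : ℕ) then -2 / h ^ 2
    else if (i : ℕ) + 1 = (j : ℕ) ∨ (j : ℕ) + 1 = (i : ℕ) then 1 / h ^ 2
    else 0

/-!
Up to the factor `(N + 1)³`, `-A⁻¹` is the Green's function
`G(a, b) = min(a, b)·(N + 1 - max(a, b))` of `-u''` on `[0, N + 1]`: it is piecewise linear in `a`
with a kink at `b`, so the three-point stencil reproduces it exactly. As `-A⁻¹` is entrywise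
nonnegative, `‖A⁻¹‖_∞` is the largest entry of `-A⁻¹ 1`, the discrete solution of `-u'' = 1`;
being quadratic, it is again the exact continuous solution `x(1 - x)/2` sampled at the grid points,
and its maximum is `1/8`.
-/

open Finset

namespace Matrix

variable {m n : Type*} [Fintype m] [Fintype n]

theorem linfty_opNorm_eq_norm_mulVec_one_of_nonneg {B : Matrix m n ℝ}
    (hB : ∀ i j, 0 ≤ B i j) : ‖B‖ = ‖B *ᵥ 1‖ := by
  have hrow : ∀ i, ‖(B *ᵥ 1) i‖₊ = ∑ j, ‖B i j‖₊ := fun i => by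
    ext
    simp [mulVec, dotProduct, Real.norm_of_nonneg (hB i _),
      Real.norm_of_nonneg (sum_nonneg fun j _ => hB i j)]
  rw [linfty_opNorm_def, ← coe_nnnorm, Pi.nnnorm_def]
  simp only [hrow]

end Matrix

theorem dirichletLaplacian_apply (N : ℕ) (h : ℝ) (i j : Fin N) :
    dirichletLaplacian N h i j =
      ((if (j : ℕ) = i then -2 else 0) + (if (j : ℕ) = i + 1 then 1 else 0) +
        (if (j : ℕ) + 1 = i then 1 else 0)) / h ^ 2 := by
  unfold dirichletLaplacian
  simp only [of_apply]
  split_ifs <;> first | omega | ring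

theorem dirichletLaplacian_mulVec_apply (N : ℕ) (h : ℝ) (g : ℕ → ℝ) (hg0 : g 0 = 0)
    (hgN : g (N + 1) = 0) (i : Fin N) :
    (dirichletLaplacian N h *ᵥ fun j => g (j + 1)) i =
      (g i - 2 * g (i + 1) + g (i + 2)) / h ^ 2 := by
  have hprev : ∑ m ∈ range N, (if m + 1 = (i : ℕ) then g (m + 1) else 0) = g i := by
    have h := sum_range_succ' (fun k => if k = (i : ℕ) then g k else 0) N
    rw [sum_ite_eq', if_pos (by simp)] at h
    simpa [hg0] using h.symm
  have hnext : ∑ m ∈ range N, (if m = (i : ℕ) + 1 then g (m + 1) else 0) = g (i + 2) := by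
    rw [sum_ite_eq']
    split_ifs with hi
    · rfl
    · rw [show (i : ℕ) + 2 = N + 1 by simp at hi; omega, hgN]
  simp only [mulVec, dotProduct, dirichletLaplacian_apply, div_mul_eq_mul_div, ← sum_div]
  rw [Fin.sum_univ_eq_sum_range fun m => ((if m = (i : ℕ) then -2 else 0) +
    (if m = i + 1 then 1 else 0) + (if m + 1 = i then 1 else 0)) * g (m + 1)]
  simp only [add_mul, ite_mul, zero_mul, one_mul, sum_add_distrib, hprev, hnext]
  simp only [sum_ite_eq', mem_range, Fin.is_lt, if_true]
  ring

/-- The Green's function of `-u''` on `[0, L]` with Dirichlet conditions, at integer points. -/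
noncomputable def dirichletGreen (L : ℝ) (a b : ℕ) : ℝ := (min a b : ℕ) * (L - (max a b : ℕ))

theorem dirichletGreen_zero_left (L : ℝ) (b : ℕ) : dirichletGreen L 0 b = 0 := by
  simp [dirichletGreen]

theorem dirichletGreen_length_left (N b : ℕ) (hb : b ≤ N + 1) :
    dirichletGreen (N + 1) (N + 1) b = 0 := by
  simp [dirichletGreen, max_eq_left hb]

theorem dirichletGreen_nonneg {N a b : ℕ} (ha : a ≤ N + 1) (hb : b ≤ N + 1) :
    0 ≤ dirichletGreen (N + 1) a b := by
  have : ((max a b : ℕ) : ℝ) ≤ N + 1 := by exact_mod_cast max_le ha hb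
  unfold dirichletGreen
  exact mul_nonneg (Nat.cast_nonneg _) (by linarith)

theorem dirichletGreen_secondDiff (L : ℝ) (a b : ℕ) :
    dirichletGreen L a b - 2 * dirichletGreen L (a + 1) b + dirichletGreen L (a + 2) b =
      if a + 1 = b then -L else 0 := by
  unfold dirichletGreen
  rcases lt_trichotomy (a + 1) b with hab | rfl | hab
  · rw [if_neg hab.ne, min_eq_left (by omega), min_eq_left (by omega), min_eq_left (by omega),
      max_eq_right (by omega), max_eq_right (by omega), max_eq_right (by omega)]
    push_cast; ring
  · rw [if_pos rfl, min_eq_left (by omega), min_eq_left (by omega), min_eq_right (by omega),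
      max_eq_right (by omega), max_eq_right (by omega), max_eq_left (by omega)]
    push_cast; ring
  · rw [if_neg hab.ne', min_eq_right (by omega), min_eq_right (by omega), min_eq_right (by omega),
      max_eq_left (by omega), max_eq_left (by omega), max_eq_left (by omega)]
    push_cast; ring

noncomputable def dirichletGreenMatrix (N : ℕ) : Matrix (Fin N) (Fin N) ℝ :=
  of fun i j => dirichletGreen (N + 1) (i + 1) (j + 1) / ((N : ℝ) + 1) ^ 3

theorem dirichletLaplacian_mul_dirichletGreenMatrix (N : ℕ) :
    dirichletLaplacian N (1 / ((N : ℝ) + 1)) * dirichletGreenMatrix N = -1 := by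
  ext i k
  set g : ℕ → ℝ := fun a => dirichletGreen (N + 1) a (k + 1) / ((N : ℝ) + 1) ^ 3
  have hcol : (dirichletLaplacian N (1 / ((N : ℝ) + 1)) * dirichletGreenMatrix N) i k =
      (g i - 2 * g (i + 1) + g (i + 2)) / (1 / ((N : ℝ) + 1)) ^ 2 :=
    dirichletLaplacian_mulVec_apply N _ g (by simp [g, dirichletGreen_zero_left])
      (by simp [g, dirichletGreen_length_left N (k + 1) (by omega)]) i
  rw [hcol]
  simp only [g, ← sub_div, ← add_div, ← mul_div_assoc, dirichletGreen_secondDiff,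
    Matrix.neg_apply, Matrix.one_apply, Fin.ext_iff, Nat.add_right_cancel_iff]
  split_ifs
  · field_simp
  · simp

theorem dirichletGreenMatrix_mul_dirichletLaplacian (N : ℕ) :
    dirichletGreenMatrix N * dirichletLaplacian N (1 / ((N : ℝ) + 1)) = -1 := by
  rw [← neg_eq_iff_eq_neg, ← neg_mul, mul_eq_one_comm, mul_neg,
    dirichletLaplacian_mul_dirichletGreenMatrix, neg_neg]

/-- The solution of `-u'' = 1` on `[0, L]` with `u 0 = u L = 0`. -/
noncomputable def dirichletTorsion (L x : ℝ) : ℝ := x * (L - x) / 2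

theorem dirichletTorsion_secondDiff (L x : ℝ) :
    dirichletTorsion L x - 2 * dirichletTorsion L (x + 1) + dirichletTorsion L (x + 2) = -1 := by
  unfold dirichletTorsion
  ring

theorem dirichletTorsion_le (L x : ℝ) : dirichletTorsion L x ≤ L ^ 2 / 8 := by
  unfold dirichletTorsion
  nlinarith [sq_nonneg (L - 2 * x)]

theorem dirichletGreenMatrix_mulVec_one (N : ℕ) :
    dirichletGreenMatrix N *ᵥ 1 =
      fun i : Fin N => dirichletTorsion (N + 1) ((i : ℕ) + 1) / ((N : ℝ) + 1) ^ 2 := by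
  set g : ℕ → ℝ := fun a => dirichletTorsion (N + 1) a / ((N : ℝ) + 1) ^ 2
  have hA : dirichletLaplacian N (1 / ((N : ℝ) + 1)) *ᵥ (fun i => g (i + 1)) = -1 := by
    ext i
    rw [dirichletLaplacian_mulVec_apply N _ g (by simp [g, dirichletTorsion])
      (by simp [g, dirichletTorsion]) i]
    have := dirichletTorsion_secondDiff (N + 1) (i : ℕ)
    simp only [g, Pi.neg_apply, Pi.one_apply]
    push_cast
    field_simp
    linear_combination this
  calc dirichletGreenMatrix N *ᵥ 1
      = -(dirichletGreenMatrix N *ᵥ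
          (dirichletLaplacian N (1 / ((N : ℝ) + 1)) *ᵥ fun i => g (i + 1))) := by
        rw [hA, mulVec_neg, neg_neg]
    _ = fun i : Fin N => g (i + 1) := by
        rw [mulVec_mulVec, dirichletGreenMatrix_mul_dirichletLaplacian, neg_mulVec, one_mulVec,
          neg_neg]
    _ = _ := by
        ext i
        simp [g]

theorem dirichletGreenMatrix_nonneg (N : ℕ) (i j : Fin N) : 0 ≤ dirichletGreenMatrix N i j :=
  div_nonneg (dirichletGreen_nonneg (by omega) (by omega)) (by positivity)

theorem dirichletGreenMatrix_norm_le (N : ℕ) : ‖dirichletGreenMatrix N‖ ≤ 1 / 8 := by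
  rw [linfty_opNorm_eq_norm_mulVec_one_of_nonneg (dirichletGreenMatrix_nonneg N)]
  refine (pi_norm_le_iff_of_nonneg (by norm_num)).2 fun i => ?_
  have hrow : 0 ≤ (dirichletGreenMatrix N *ᵥ 1) i := by
    simp only [mulVec, dotProduct, Pi.one_apply, mul_one]
    exact sum_nonneg fun j _ => dirichletGreenMatrix_nonneg N i j
  rw [Real.norm_of_nonneg hrow, dirichletGreenMatrix_mulVec_one, div_le_iff₀ (by positivity)]
  calc dirichletTorsion (N + 1) ((i : ℕ) + 1) ≤ ((N : ℝ) + 1) ^ 2 / 8 :=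
        dirichletTorsion_le _ _
    _ = 1 / 8 * ((N : ℝ) + 1) ^ 2 := by ring

theorem dirichletLaplacian_inv_bound_general (N : ℕ) :
    IsUnit (dirichletLaplacian N (1 / ((N : ℝ) + 1))).det ∧
      ‖(dirichletLaplacian N (1 / ((N : ℝ) + 1)))⁻¹‖ ≤ 1 / 8 := by
  have hinv : dirichletLaplacian N (1 / ((N : ℝ) + 1)) * -dirichletGreenMatrix N = 1 := by
    rw [mul_neg, dirichletLaplacian_mul_dirichletGreenMatrix, neg_neg]
  refine ⟨isUnit_det_of_right_inverse hinv, ?_⟩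
  rw [inv_eq_right_inv hinv, norm_neg]
  exact dirichletGreenMatrix_norm_le N

/-- For `A = (1/h²)·tridiag(1,−2,1)` with `h = 1/(N+1)`, `A` is invertible and
`‖A⁻¹‖_∞ ≤ 1/8`, where `‖·‖_∞` is the operator norm induced by the maximum norm on `ℝ^N`. -/
theorem dirichletLaplacian_inv_bound (N : ℕ) (hN : 1 ≤ N) :
    IsUnit (dirichletLaplacian N (1 / ((N : ℝ) + 1))).det ∧
      ‖(dirichletLaplacian N (1 / ((N : ℝ) + 1)))⁻¹‖ ≤ 1 / 8 :=
  dirichletLaplacian_inv_bound_general N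
end
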